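/- Let S be a finite abelian group, p a prime, and n ≥ 1. If the group S × Z_{p^n} does not have the periodic tiling (PT) property, then the group S × Z_{p^{n+1}} does not have the periodic tiling (PT) property. -/

import Mathlib

/-- `(Ω, T)` is a tiling pair of the abelian group `G`: every element of `G`
has a unique representation `ω + t` with `ω ∈ Ω`, `t ∈ T`. -/
def IsTilingPair {G : Type*} [AddCommGroup G] (Ω T : Set G) : Prop :=
  ∀ g : G, ∃! p : G × G, p.1 ∈ Ω ∧ p.2 ∈ T ∧ p.1 + p.2 = g

/-- A nonempty subset `A` of `G` is periodic if `A + g = A` for some nonzero `g`. -/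
def IsPeriodic {G : Type*} [AddCommGroup G] (A : Set G) : Prop :=
  A.Nonempty ∧ ∃ g : G, g ≠ 0 ∧ (fun a => a + g) '' A = A

/-- `Ω` is a tile of `G` if it has a tiling complement. -/
def IsTile {G : Type*} [AddCommGroup G] (Ω : Set G) : Prop :=
  ∃ T : Set G, IsTilingPair Ω T

/-- `G` has the periodic tiling (PT) property: for every tiling pair `(Ω, T)`,
either `Ω` is periodic, or `T` can be replaced by a periodic tiling complement. -/
def HasPT (G : Type*) [AddCommGroup G] : Prop :=
  ∀ Ω T : Set G, IsTilingPair Ω T →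
    IsPeriodic Ω ∨ ∃ T' : Set G, IsPeriodic T' ∧ IsTilingPair Ω T'

/-- A tile `Ω` is uniformly periodic if all its tiling complements share a
common nonzero period. -/
def UniformlyPeriodic {G : Type*} [AddCommGroup G] (Ω : Set G) : Prop :=
  ∃ g : G, g ≠ 0 ∧ ∀ T : Set G, IsTilingPair Ω T → (fun t => t + g) '' T = T

/-- A tile `Ω` is dual uniformly periodic if there is a periodic tile `Ω'`
which is a tiling complement of every tiling complement of `Ω`. -/
def DualUniformlyPeriodic {G : Type*} [AddCommGroup G] (Ω : Set G) : Prop :=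
  ∃ Ω' : Set G, IsPeriodic Ω' ∧ IsTile Ω' ∧
    ∀ T : Set G, IsTilingPair Ω T → IsTilingPair Ω' T

/-- `G` has the uniformly periodic tiling (UPT) property: every tile of `G`
is either uniformly periodic or dual uniformly periodic. -/
def HasUPT (G : Type*) [AddCommGroup G] : Prop :=
  ∀ Ω : Set G, IsTile Ω → UniformlyPeriodic Ω ∨ DualUniformlyPeriodic Ω

/-!
Write `G' = S × Z_{p^{n+1}}` and let `H ≅ S × Z_{p^n}` be its subgroup `S × p Z_{p^{n+1}}`, embedded
by `(s, x) ↦ (s, p x)`. The set `E = {0} × {0, …, p - 1}` is a tiling complement of `H`, and `H`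
meets every nontrivial subgroup of `G'` nontrivially: if `g ∉ H` then `p g` is a nonzero element
of `H`. A tiling `(Ω, T)` of `H` witnessing the failure of PT lifts to the tiling `(Ω + E, T)` of
`G'`. If `Ω + E` were periodic, it would have a period in `H`, which is then a period of
`Ω = H ∩ (Ω + E)`; if `Ω + E` had a periodic complement `T'`, then `H ∩ (E + T')` would be a
periodic complement of `Ω` in `H`.
-/

open Set Function Pointwise AddAction

section Tiling

variable {G G' : Type*} [AddCommGroup G] [AddCommGroup G']

theorem isTilingPair_iff {A B : Set G} :
    IsTilingPair A B ↔ A + B = univ ∧ InjOn (fun q : G × G => q.1 + q.2) (A ×ˢ B) := by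
  simp only [IsTilingPair, ExistsUnique, eq_univ_iff_forall, mem_add, InjOn, mem_prod, Prod.exists,
    Prod.forall, Prod.mk.injEq]
  constructor
  · intro h
    refine ⟨fun g => ?_, fun a b ⟨ha, hb⟩ a' b' ⟨ha', hb'⟩ hab => ?_⟩
    · obtain ⟨a, b, ⟨ha, hb, rfl⟩, -⟩ := h g
      exact ⟨a, ha, b, hb, rfl⟩
    · obtain ⟨c, d, -, huniq⟩ := h (a + b)
      obtain ⟨rfl, rfl⟩ := huniq a b ⟨ha, hb, rfl⟩
      obtain ⟨rfl, rfl⟩ := huniq a' b' ⟨ha', hb', hab.symm⟩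
      exact ⟨rfl, rfl⟩
  · rintro ⟨hcover, hinj⟩ g
    obtain ⟨a, ha, b, hb, rfl⟩ := hcover g
    exact ⟨a, b, ⟨ha, hb, rfl⟩, fun a' b' ⟨ha', hb', hab⟩ => hinj a' b' ⟨ha', hb'⟩ a b ⟨ha, hb⟩ hab⟩

theorem isTilingPair_univ_zero : IsTilingPair (univ : Set G) {0} :=
  fun g => ⟨(g, 0), by simp, fun ⟨a, b⟩ ⟨_, hb, hab⟩ => by simp_all⟩

namespace IsTilingPair

variable {A B C : Set G}

theorem add_eq_univ (h : IsTilingPair A B) : A + B = univ :=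
  (isTilingPair_iff.1 h).1

theorem injOn (h : IsTilingPair A B) : InjOn (fun q : G × G => q.1 + q.2) (A ×ˢ B) :=
  (isTilingPair_iff.1 h).2

theorem mem_add (h : IsTilingPair A B) (g : G) : g ∈ A + B :=
  h.add_eq_univ ▸ mem_univ g

theorem eq_of_add_eq (h : IsTilingPair A B) {a a' b b' : G} (ha : a ∈ A) (hb : b ∈ B)
    (ha' : a' ∈ A) (hb' : b' ∈ B) (hab : a + b = a' + b') : a = a' ∧ b = b' :=
  Prod.ext_iff.1 (h.injOn (mk_mem_prod ha hb) (mk_mem_prod ha' hb') hab)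

theorem nonempty_left (h : IsTilingPair A B) : A.Nonempty := by
  obtain ⟨a, ha, -⟩ := h.mem_add 0
  exact ⟨a, ha⟩

theorem nonempty_right (h : IsTilingPair A B) : B.Nonempty := by
  obtain ⟨-, -, b, hb, -⟩ := h.mem_add 0
  exact ⟨b, hb⟩

theorem prod {H : Type*} [AddCommGroup H] {A' B' : Set H} (h : IsTilingPair A B)
    (h' : IsTilingPair A' B') : IsTilingPair (A ×ˢ A') (B ×ˢ B') := by
  refine isTilingPair_iff.2
    ⟨by rw [prod_add_prod_comm, h.add_eq_univ, h'.add_eq_univ, univ_prod_univ], ?_⟩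
  rintro ⟨⟨a, a'⟩, b, b'⟩ ⟨⟨ha, ha'⟩, hb, hb'⟩ ⟨⟨c, c'⟩, d, d'⟩ ⟨⟨hc, hc'⟩, hd, hd'⟩ heq
  obtain ⟨rfl, rfl⟩ := h.eq_of_add_eq ha hb hc hd (congrArg Prod.fst heq)
  obtain ⟨rfl, rfl⟩ := h'.eq_of_add_eq ha' hb' hc' hd' (congrArg Prod.snd heq)
  rfl

theorem assoc (h : IsTilingPair (A + B) C) (hAB : InjOn (fun q : G × G => q.1 + q.2) (A ×ˢ B)) :
    IsTilingPair A (B + C) := by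
  refine isTilingPair_iff.2 ⟨by rw [← add_assoc, h.add_eq_univ], ?_⟩
  rintro ⟨a, s⟩ ⟨ha, b, hb, c, hc, hs⟩ ⟨a', s'⟩ ⟨ha', b', hb', c', hc', hs'⟩ heq
  dsimp only at hs hs' heq
  subst hs hs'
  obtain ⟨hab, rfl⟩ := h.eq_of_add_eq (add_mem_add ha hb) hc (add_mem_add ha' hb') hc'
    (by simpa only [add_assoc] using heq)
  obtain ⟨rfl, rfl⟩ := Prod.ext_iff.1 (hAB (mk_mem_prod ha hb) (mk_mem_prod ha' hb') hab)
  rfl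

variable {ι : G →+ G'} {E : Set G'}

theorem preimage_of_image (hι : Injective ι) {S : Set G'} (h : IsTilingPair (ι '' A) S) :
    IsTilingPair A (ι ⁻¹' S) := by
  refine isTilingPair_iff.2 ⟨eq_univ_of_forall fun g => ?_, ?_⟩
  · obtain ⟨_, ⟨a, ha, rfl⟩, s, hs, hsum⟩ := h.mem_add (ι g)
    refine ⟨a, ha, g - a, ?_, add_sub_cancel _ _⟩
    rwa [mem_preimage, map_sub, ← hsum, add_sub_cancel_left]
  · rintro ⟨a, b⟩ ⟨ha, hb⟩ ⟨a', b'⟩ ⟨ha', hb'⟩ heq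
    obtain ⟨h₁, h₂⟩ := h.eq_of_add_eq (mem_image_of_mem ι ha) hb (mem_image_of_mem ι ha') hb'
      (by simpa only [map_add] using congrArg ι heq)
    exact Prod.ext (hι h₁) (hι h₂)

theorem image_add (h : IsTilingPair A B) (hι : Injective ι) (hE : IsTilingPair (range ι) E) :
    IsTilingPair (ι '' A + E) (ι '' B) := by
  refine isTilingPair_iff.2 ⟨eq_univ_of_forall fun g => ?_, ?_⟩
  · obtain ⟨_, ⟨x, rfl⟩, e, he, rfl⟩ := hE.mem_add g
    obtain ⟨a, ha, b, hb, rfl⟩ := h.mem_add x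
    exact ⟨ι a + e, add_mem_add (mem_image_of_mem ι ha) he, ι b, mem_image_of_mem ι hb,
      by dsimp only; rw [map_add, add_right_comm]⟩
  · rintro ⟨_, _⟩ ⟨⟨_, ⟨a, ha, rfl⟩, e, he, rfl⟩, b, hb, rfl⟩
      ⟨_, _⟩ ⟨⟨_, ⟨a', ha', rfl⟩, e', he', rfl⟩, b', hb', rfl⟩ heq
    obtain ⟨hx, rfl⟩ := hE.eq_of_add_eq (mem_range_self (a + b)) he (mem_range_self (a' + b')) he'
      (by rw [map_add, map_add]; exact (add_right_comm ..).trans (heq.trans (add_right_comm ..)))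
    obtain ⟨rfl, rfl⟩ := h.eq_of_add_eq ha hb ha' hb' (hι hx)
    rfl

end IsTilingPair

theorem preimage_image_add {ι : G →+ G'} (hι : Injective ι) {E : Set G'}
    (hE : IsTilingPair (range ι) E) (hE0 : 0 ∈ E) (A : Set G) : ι ⁻¹' (ι '' A + E) = A := by
  refine Subset.antisymm (fun x ⟨_, ⟨a, ha, rfl⟩, e, he, hx⟩ => ?_)
    (fun a ha => ⟨ι a, mem_image_of_mem ι ha, 0, hE0, add_zero _⟩)
  obtain ⟨hax, -⟩ := hE.eq_of_add_eq (mem_range_self a) he (mem_range_self x) hE0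
    (hx.trans (add_zero _).symm)
  exact hι hax ▸ ha

theorem isPeriodic_iff {A : Set G} : IsPeriodic A ↔ A.Nonempty ∧ stabilizer G A ≠ ⊥ := by
  have hshift : ∀ g : G, (fun a => a + g) '' A = g +ᵥ A := fun g => by
    rw [← image_vadd]
    simp only [vadd_eq_add, add_comm]
  rw [Ne, AddSubgroup.eq_bot_iff_forall]
  push Not
  simp only [IsPeriodic, hshift, ← mem_stabilizer_iff]
  exact and_congr_right' ⟨fun ⟨g, h0, hg⟩ => ⟨g, hg, h0⟩, fun ⟨g, hg, h0⟩ => ⟨g, h0, hg⟩⟩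

theorem comap_stabilizer_le_stabilizer_preimage (ι : G →+ G') (S : Set G') :
    (stabilizer G' S).comap ι ≤ stabilizer G (ι ⁻¹' S) := fun y hy =>
  mem_stabilizer_set.2 fun b => by
    simpa only [mem_preimage, vadd_eq_add, map_add] using mem_stabilizer_set.1 hy (ι b)

theorem stabilizer_le_stabilizer_add_left (E T : Set G) : stabilizer G T ≤ stabilizer G (E + T) :=
  fun g hg => by rw [mem_stabilizer_iff] at hg ⊢; rw [← add_vadd_comm, hg]

theorem AddSubgroup.comap_ne_bot_of_nsmul_mem_range {ι : G →+ G'} {p : ℕ}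
    (hrange : ∀ g, p • g ∈ range ι) (htors : ∀ g, p • g = 0 → g ∈ range ι)
    {K : AddSubgroup G'} (hK : K ≠ ⊥) : K.comap ι ≠ ⊥ := by
  obtain ⟨g, hgK, hg0⟩ := K.bot_or_exists_ne_zero.resolve_left hK
  obtain ⟨g', hg'K, hg'0, y, rfl⟩ : ∃ g' ∈ K, g' ≠ 0 ∧ g' ∈ range ι := by
    by_cases hg : g ∈ range ι
    · exact ⟨g, hgK, hg0, hg⟩
    · exact ⟨p • g, K.nsmul_mem hgK p, mt (htors g) hg, hrange g⟩
  rw [Ne, AddSubgroup.eq_bot_iff_forall]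
  exact fun h => hg'0 (by rw [h y hg'K, map_zero])

theorem isPeriodic_preimage {ι : G →+ G'} (hess : ∀ K : AddSubgroup G', K ≠ ⊥ → K.comap ι ≠ ⊥)
    {S : Set G'} (hS : stabilizer G' S ≠ ⊥) (hne : (ι ⁻¹' S).Nonempty) : IsPeriodic (ι ⁻¹' S) :=
  isPeriodic_iff.2
    ⟨hne, ne_bot_of_le_ne_bot (hess _ hS) (comap_stabilizer_le_stabilizer_preimage ι S)⟩

theorem not_hasPT_of_injective {ι : G →+ G'} (hι : Injective ι) {E : Set G'} (hE0 : 0 ∈ E)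
    (hE : IsTilingPair (range ι) E) (hess : ∀ K : AddSubgroup G', K ≠ ⊥ → K.comap ι ≠ ⊥)
    (hG : ¬HasPT G) : ¬HasPT G' := by
  simp only [HasPT, not_forall, not_or, not_exists, not_and] at hG
  obtain ⟨Ω, T, hΩT, hΩ, hT⟩ := hG
  have hpre : ι ⁻¹' (ι '' Ω + E) = Ω := preimage_image_add hι hE hE0 Ω
  intro hG'
  rcases hG' _ _ (hΩT.image_add hι hE) with hW | ⟨T', hT', hWT'⟩
  · have hne : (ι ⁻¹' (ι '' Ω + E)).Nonempty := by rw [hpre]; exact hΩT.nonempty_left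
    exact hΩ (hpre ▸ isPeriodic_preimage hess (isPeriodic_iff.1 hW).2 hne)
  · have hdirect : InjOn (fun q : G' × G' => q.1 + q.2) ((ι '' Ω) ×ˢ E) :=
      hE.injOn.mono (prod_mono (image_subset_range ι Ω) subset_rfl)
    have hΩT'' : IsTilingPair Ω (ι ⁻¹' (E + T')) := (hWT'.assoc hdirect).preimage_of_image hι
    exact hT _ (isPeriodic_preimage hess (ne_bot_of_le_ne_bot (isPeriodic_iff.1 hT').2
      (stabilizer_le_stabilizer_add_left E T')) hΩT''.nonempty_right) hΩT''

end Tiling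

namespace ZMod

variable (m k : ℕ)

def mulLeftHom : ZMod m →+ ZMod (m * k) :=
  ZMod.lift m ⟨(AddMonoidHom.mulLeft (k : ZMod (m * k))).comp (Int.castAddHom _), by
    simp [← Nat.cast_mul, mul_comm k m]⟩

variable {m k}

theorem mulLeftHom_natCast (a : ℕ) : mulLeftHom m k a = ((k * a : ℕ) : ZMod (m * k)) := by
  rw [← Int.cast_natCast, mulLeftHom, lift_coe]
  simp

theorem mulLeftHom_apply [NeZero m] (a : ZMod m) :
    mulLeftHom m k a = ((k * a.val : ℕ) : ZMod (m * k)) := by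
  rw [← mulLeftHom_natCast, natCast_zmod_val]

theorem mulLeftHom_add_natCast_inj [NeZero m] {a a' : ZMod m} {i i' : ℕ} (hi : i < k)
    (hi' : i' < k) (h : mulLeftHom m k a + i = mulLeftHom m k a' + i') : a = a' ∧ i = i' := by
  have hlt : ∀ (b : ZMod m) (j : ℕ), j < k → k * b.val + j < m * k := fun b j hj => by
    nlinarith [b.val_lt]
  rw [mulLeftHom_apply, mulLeftHom_apply, ← Nat.cast_add, ← Nat.cast_add, natCast_eq_natCast_iff',
    Nat.mod_eq_of_lt (hlt a i hi), Nat.mod_eq_of_lt (hlt a' i' hi')] at h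
  have hk : 0 < k := by omega
  have e := (Nat.div_mod_unique hk).2 ⟨(add_comm _ _).trans h, hi⟩
  have e' := (Nat.div_mod_unique hk).2 ⟨add_comm i' (k * a'.val), hi'⟩
  exact ⟨val_injective m (e.1.symm.trans e'.1), e.2.symm.trans e'.2⟩

theorem mulLeftHom_injective [NeZero m] [NeZero k] : Injective (mulLeftHom m k) := fun a a' h =>
  (mulLeftHom_add_natCast_inj (NeZero.pos k) (NeZero.pos k) (by simpa using h)).1

theorem isTilingPair_range_mulLeftHom [NeZero m] [NeZero k] :
    IsTilingPair (range (mulLeftHom m k)) (Nat.cast '' Iio k) := by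
  refine isTilingPair_iff.2 ⟨eq_univ_of_forall fun z => ?_, ?_⟩
  · refine ⟨_, ⟨(z.val / k : ℕ), rfl⟩, _, ⟨z.val % k, Nat.mod_lt _ (NeZero.pos k), rfl⟩, ?_⟩
    dsimp only
    rw [mulLeftHom_natCast, ← Nat.cast_add, Nat.div_add_mod, natCast_zmod_val]
  · rintro ⟨_, _⟩ ⟨⟨a, rfl⟩, i, hi, rfl⟩ ⟨_, _⟩ ⟨⟨a', rfl⟩, i', hi', rfl⟩ heq
    obtain ⟨rfl, rfl⟩ := mulLeftHom_add_natCast_inj hi hi' heq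
    rfl

theorem nsmul_mem_range_mulLeftHom [NeZero (m * k)] (z : ZMod (m * k)) :
    k • z ∈ range (mulLeftHom m k) :=
  ⟨z.val, by rw [mulLeftHom_natCast, Nat.cast_mul, natCast_zmod_val, nsmul_eq_mul]⟩

theorem mem_range_mulLeftHom_of_nsmul_eq_zero [NeZero m] [NeZero k] (hkm : k ∣ m)
    {z : ZMod (m * k)} (hz : k • z = 0) : z ∈ range (mulLeftHom m k) := by
  rw [nsmul_eq_mul', ← natCast_zmod_val z, ← Nat.cast_mul, natCast_eq_zero_iff] at hz
  have hz : k ∣ z.val := hkm.trans (Nat.dvd_of_mul_dvd_mul_right (NeZero.pos k) hz)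
  exact ⟨(z.val / k : ℕ), by rw [mulLeftHom_natCast, Nat.mul_div_cancel' hz, natCast_zmod_val]⟩

end ZMod

theorem not_hasPT_prod_zmod_mul (S : Type*) [AddCommGroup S] {m k : ℕ} [NeZero m] [NeZero k]
    (hkm : k ∣ m) (h : ¬HasPT (S × ZMod m)) : ¬HasPT (S × ZMod (m * k)) := by
  set ι := (AddMonoidHom.id S).prodMap (ZMod.mulLeftHom m k)
  have hrange : range ι = univ ×ˢ range (ZMod.mulLeftHom m k) := by
    simp [ι, AddMonoidHom.coe_prodMap, range_prodMap]
  refine not_hasPT_of_injective (ι := ι) (E := {0} ×ˢ (Nat.cast '' Iio k))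
    (injective_id.prodMap ZMod.mulLeftHom_injective) ⟨rfl, 0, NeZero.pos k, Nat.cast_zero⟩
    (hrange ▸ isTilingPair_univ_zero.prod ZMod.isTilingPair_range_mulLeftHom)
    (fun K => AddSubgroup.comap_ne_bot_of_nsmul_mem_range (p := k) (fun g => ?_) (fun g hg => ?_)) h
  · rw [hrange]
    exact ⟨mem_univ _, ZMod.nsmul_mem_range_mulLeftHom g.2⟩
  · rw [hrange]
    exact ⟨mem_univ _, ZMod.mem_range_mulLeftHom_of_nsmul_eq_zero hkm (congrArg Prod.snd hg)⟩

theorem not_hasPT_prod_pow_succ_general (S : Type*) [AddCommGroup S]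
    (p : ℕ) (hp : p.Prime) (n : ℕ) (hn : 1 ≤ n)
    (hS : ¬ HasPT (S × ZMod (p ^ n))) :
    ¬ HasPT (S × ZMod (p ^ (n + 1))) := by
  have : NeZero p := ⟨hp.ne_zero⟩
  rw [pow_succ]
  exact not_hasPT_prod_zmod_mul S (dvd_pow_self p (by omega)) hS

/-- If `S × Z_{p^n}` does not have the PT property, then `S × Z_{p^{n+1}}`
does not have the PT property. -/
theorem not_hasPT_prod_pow_succ (S : Type*) [AddCommGroup S] [Fintype S]
    (p : ℕ) (hp : p.Prime) (n : ℕ) (hn : 1 ≤ n)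
    (hS : ¬ HasPT (S × ZMod (p ^ n))) :
    ¬ HasPT (S × ZMod (p ^ (n + 1))) :=
  not_hasPT_prod_pow_succ_general S p hp n hn hS
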